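/- For every fixed ξ ≥ 0: (i) ψ(·,ξ) is even, i.e. ψ(−w,ξ) = ψ(w,ξ) for all w ∈ ℝ; (ii) ψ(·,ξ) is nondecreasing on [0,∞); (iii) the map w ↦ ψ(w,ξ) + (β/2)·w² is convex on ℝ (uniform λ-convexity of ψ(·,ξ) with λ independent of ξ). -/

import Mathlib

/-- The cohesive density ψ(w,ξ) = ψ̂(|w|) if |w| ≥ ξ, and
ψ(w,ξ) = ψ̂(ξ) − ψ̂'(ξ)·(ξ² − w²)/(2ξ) if |w| < ξ. -/
noncomputable def cohesive (psih psih' : ℝ → ℝ) (w ξ : ℝ) : ℝ :=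
  if ξ ≤ |w| then psih |w| else psih ξ - psih' ξ * ((ξ ^ 2 - w ^ 2) / (2 * ξ))

/-!
By concavity ψ̂' is antitone, and it vanishes beyond ξ_c, so ψ̂' ≥ 0: both ψ̂ and the quadratic
branch are nondecreasing. The bound ψ̂'' ≥ -β makes ψ̂' + β·w nondecreasing on [0, ξ_c];
comparing its values at 0 and ξ_c gives β ≥ 0, so it stays nondecreasing on [0, ∞).
On (0, ∞) the derivative of ψ(·,ξ) + (β/2)·w² is (ψ̂'(ξ)/ξ + β)·w below ξ and ψ̂'(w) + β·w
above it; the branches agree at ξ, so the derivative is nondecreasing and the function is convex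
on [0, ∞). Being even and nondecreasing there, it is a convex nondecreasing function of |w|,
hence convex on ℝ.
-/

open Set

theorem ConcaveOn.antitoneOn_of_hasDerivWithinAt {S : Set ℝ} {f f' : ℝ → ℝ}
    (hf : ConcaveOn ℝ S f) (hf' : ∀ x ∈ S, HasDerivWithinAt f (f' x) S x) :
    AntitoneOn f' S := by
  intro x hx y hy hxy
  rcases hxy.eq_or_lt with rfl | hlt
  · exact le_rfl
  · exact (hf.le_slope_of_hasDerivWithinAt hx hy hlt (hf' y hy)).trans
      (hf.slope_le_of_hasDerivWithinAt hx hy hlt (hf' x hx))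

theorem HasDerivWithinAt.eq_zero_of_const_Ici {f : ℝ → ℝ} {d a : ℝ}
    (hd : HasDerivWithinAt f d (Ici a) a) (hconst : ∀ x ≥ a, f x = f a) : d = 0 :=
  (uniqueDiffOn_Ici a a self_mem_Ici).eq_deriv _ hd <|
    (hasDerivWithinAt_const a _ (f a)).congr (fun x hx => hconst x hx) rfl

section ConcaveProfile

variable {f f' f'' : ℝ → ℝ} {a c β : ℝ}

theorem eq_zero_of_hasDerivWithinAt_of_const_Ici (hac : a ≤ c)
    (hf' : ∀ x ∈ Ici a, HasDerivWithinAt f (f' x) (Ici a) x) (hconst : ∀ x ≥ c, f x = f c)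
    {t : ℝ} (ht : c ≤ t) : f' t = 0 :=
  ((hf' t (hac.trans ht)).mono (Ici_subset_Ici.mpr (hac.trans ht))).eq_zero_of_const_Ici
    fun x hx => by rw [hconst x (ht.trans hx), hconst t ht]

theorem ConcaveOn.deriv_nonneg_of_const_Ici (hf : ConcaveOn ℝ (Ici a) f) (hac : a ≤ c)
    (hf' : ∀ x ∈ Ici a, HasDerivWithinAt f (f' x) (Ici a) x) (hconst : ∀ x ≥ c, f x = f c)
    {t : ℝ} (ht : a ≤ t) : 0 ≤ f' t :=
  calc 0 = f' (max t c) :=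
        (eq_zero_of_hasDerivWithinAt_of_const_Ici hac hf' hconst (le_max_right t c)).symm
    _ ≤ f' t := hf.antitoneOn_of_hasDerivWithinAt hf' ht (ht.trans (le_max_left t c))
        (le_max_left t c)

theorem ConcaveOn.monotoneOn_of_const_Ici (hf : ConcaveOn ℝ (Ici a) f) (hac : a ≤ c)
    (hf' : ∀ x ∈ Ici a, HasDerivWithinAt f (f' x) (Ici a) x) (hconst : ∀ x ≥ c, f x = f c) :
    MonotoneOn f (Ici a) :=
  monotoneOn_of_hasDerivWithinAt_nonneg (convex_Ici a)
    (fun x hx => (hf' x hx).continuousWithinAt)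
    (fun x hx => (hf' x (interior_subset hx)).mono interior_subset)
    (fun _ hx => hf.deriv_nonneg_of_const_Ici hac hf' hconst (interior_subset hx))

theorem monotoneOn_add_mul_of_deriv_ge
    (hf' : ∀ x ∈ Icc a c, HasDerivWithinAt f' (f'' x) (Icc a c) x)
    (hβ : ∀ x ∈ Icc a c, -β ≤ f'' x) :
    MonotoneOn (fun x => f' x + β * x) (Icc a c) :=
  monotoneOn_of_hasDerivWithinAt_nonneg (convex_Icc a c)
    (fun x hx => ((hf' x hx).continuousWithinAt).add (continuousWithinAt_id.const_mul β))
    (fun x hx => ((hf' x (interior_subset hx)).mono interior_subset).add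
      (((hasDerivAt_id x).const_mul β).hasDerivWithinAt.congr_deriv (mul_one β)))
    (fun x hx => by linarith [hβ x (interior_subset hx)])

theorem nonneg_of_monotoneOn_add_mul (hmono : MonotoneOn (fun x => f' x + β * x) (Icc a c))
    (hac : a < c) (hf' : f' c ≤ f' a) : 0 ≤ β := by
  have hends := hmono (left_mem_Icc.mpr hac.le) (right_mem_Icc.mpr hac.le) hac.le
  nlinarith

theorem MonotoneOn.add_mul_Ici_of_eq_zero (hmono : MonotoneOn (fun x => f' x + β * x) (Icc a c))
    (hac : a ≤ c) (hβ : 0 ≤ β) (hzero : ∀ x ≥ c, f' x = 0) :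
    MonotoneOn (fun x => f' x + β * x) (Ici a) := by
  rw [← Icc_union_Ici_eq_Ici hac]
  refine hmono.union_right (fun x hx y hy hxy => ?_) (isGreatest_Icc hac) isLeast_Ici
  simp only [hzero x hx, hzero y hy, zero_add]
  exact mul_le_mul_of_nonneg_left hxy hβ

end ConcaveProfile

noncomputable def cohesiveDeriv (psih' : ℝ → ℝ) (w ξ : ℝ) : ℝ :=
  if ξ ≤ w then psih' w else psih' ξ * w / ξ

section Cohesive

variable {ψ ψ' : ℝ → ℝ} {ξ β : ℝ}

theorem cohesive_neg (w : ℝ) : cohesive ψ ψ' (-w) ξ = cohesive ψ ψ' w ξ := by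
  simp only [cohesive, abs_neg, neg_sq]

theorem cohesive_of_le {w : ℝ} (h : ξ ≤ |w|) : cohesive ψ ψ' w ξ = ψ |w| := if_pos h

theorem cohesive_of_abs_le {w : ℝ} (h : |w| ≤ ξ) :
    cohesive ψ ψ' w ξ = ψ ξ - ψ' ξ * ((ξ ^ 2 - w ^ 2) / (2 * ξ)) := by
  rcases h.lt_or_eq with hlt | heq
  · exact if_neg hlt.not_ge
  · rw [cohesive_of_le heq.ge, ← sq_abs w, heq, sub_self, zero_div, mul_zero, sub_zero]

theorem continuous_cohesive (hψ : ContinuousOn ψ (Ici 0)) :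
    Continuous (cohesive ψ ψ' · ξ) := by
  refine continuous_if_le continuous_const continuous_abs
    (hψ.comp_continuous continuous_abs abs_nonneg).continuousOn (by fun_prop) ?_
  intro w hw
  rw [hw, ← sq_abs w, ← hw, sub_self, zero_div, mul_zero, sub_zero]

theorem monotoneOn_cohesive (hψ : MonotoneOn ψ (Ici 0)) (hψ' : 0 ≤ ψ' ξ) :
    MonotoneOn (cohesive ψ ψ' · ξ) (Ici 0) := by
  rintro x (hx : 0 ≤ x) y (hy : 0 ≤ y) hxy
  dsimp only
  rcases lt_or_ge y ξ with hyξ | hξy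
  · have hξ : 0 < ξ := hy.trans_lt hyξ
    rw [cohesive_of_abs_le ((abs_of_nonneg hx).trans_le (hxy.trans hyξ.le)),
      cohesive_of_abs_le ((abs_of_nonneg hy).trans_le hyξ.le)]
    have hquad : (ξ ^ 2 - y ^ 2) / (2 * ξ) ≤ (ξ ^ 2 - x ^ 2) / (2 * ξ) := by gcongr
    nlinarith
  · rw [cohesive_of_le (w := y) (by rwa [abs_of_nonneg hy]), abs_of_nonneg hy]
    rcases le_or_gt ξ x with hξx | hxξ
    · rw [cohesive_of_le (w := x) (by rwa [abs_of_nonneg hx]), abs_of_nonneg hx]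
      exact hψ hx hy hxy
    · have hξ : 0 ≤ ξ := hx.trans hxξ.le
      rw [cohesive_of_abs_le ((abs_of_nonneg hx).trans_le hxξ.le)]
      have hquad : 0 ≤ (ξ ^ 2 - x ^ 2) / (2 * ξ) := by
        apply div_nonneg _ (by positivity)
        nlinarith
      nlinarith [hψ hξ hy hξy]

-- Also true for `ξ = 0`, where `/ 0` makes the function constant and the derivative zero.
theorem hasDerivAt_quadratic_branch (a b ξ w : ℝ) :
    HasDerivAt (fun w => a - b * ((ξ ^ 2 - w ^ 2) / (2 * ξ))) (b * w / ξ) w := by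
  refine (((((hasDerivAt_pow 2 w).const_sub (ξ ^ 2)).div_const (2 * ξ)).const_mul b).const_sub
    a).congr_deriv ?_
  norm_num
  ring

theorem hasDerivWithinAt_cohesive_Iic_self (hξ : 0 < ξ) :
    HasDerivWithinAt (cohesive ψ ψ' · ξ) (ψ' ξ) (Iic ξ) ξ := by
  have hq := (hasDerivAt_quadratic_branch (ψ ξ) (ψ' ξ) ξ ξ).hasDerivWithinAt (s := Iic ξ)
  rw [mul_div_cancel_right₀ _ hξ.ne'] at hq
  refine hq.congr_of_eventuallyEq ?_ ?_
  · filter_upwards [Ioc_mem_nhdsLE (by linarith : -ξ < ξ)] with y hy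
    exact cohesive_of_abs_le (abs_le.mpr ⟨hy.1.le, hy.2⟩)
  · exact cohesive_of_abs_le (abs_of_pos hξ).le

theorem hasDerivAt_cohesive (hξ : 0 ≤ ξ)
    (hψ : ∀ w ∈ Ici ξ, HasDerivWithinAt ψ (ψ' w) (Ici ξ) w) {w : ℝ} (hw : 0 < w) :
    HasDerivAt (cohesive ψ ψ' · ξ) (cohesiveDeriv ψ' w ξ) w := by
  rcases lt_trichotomy w ξ with hwξ | rfl | hξw
  · rw [cohesiveDeriv, if_neg hwξ.not_ge]
    refine (hasDerivAt_quadratic_branch (ψ ξ) _ _ _).congr_of_eventuallyEq ?_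
    filter_upwards [Ioo_mem_nhds (by linarith : -ξ < w) hwξ] with y hy
    exact cohesive_of_abs_le (abs_le.mpr ⟨hy.1.le, hy.2.le⟩)
  · rw [cohesiveDeriv, if_pos le_rfl]
    have hright : HasDerivWithinAt (cohesive ψ ψ' · w) (ψ' w) (Ici w) w :=
      (hψ w self_mem_Ici).congr_of_mem (fun y (hy : w ≤ y) => by
        rw [cohesive_of_le (w := y) (by rwa [abs_of_nonneg (hw.le.trans hy)]),
          abs_of_nonneg (hw.le.trans hy)]) self_mem_Ici
    simpa using (hasDerivWithinAt_cohesive_Iic_self (ψ := ψ) (ψ' := ψ') hw).union hright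
  · rw [cohesiveDeriv, if_pos hξw.le]
    refine ((hψ w hξw.le).hasDerivAt (Ici_mem_nhds hξw)).congr_of_eventuallyEq ?_
    filter_upwards [Ioi_mem_nhds hξw] with y (hy : ξ < y)
    rw [cohesive_of_le (w := y) (by rw [abs_of_nonneg (hξ.trans hy.le)]; exact hy.le),
      abs_of_nonneg (hξ.trans hy.le)]

theorem monotoneOn_cohesiveDeriv_add_mul (hmono : MonotoneOn (fun w => ψ' w + β * w) (Ici ξ))
    (hψ' : 0 ≤ ψ' ξ) (hβ : 0 ≤ β) :
    MonotoneOn (fun w => cohesiveDeriv ψ' w ξ + β * w) (Ioi 0) := by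
  rintro x (hx : 0 < x) y - hxy
  simp only [cohesiveDeriv]
  split_ifs with hξx hξy hξy
  · exact hmono hξx hξy hxy
  · exact absurd (hξx.trans hxy) hξy
  · have hξ : 0 < ξ := hx.trans (not_le.mp hξx)
    have hquad : ψ' ξ * x / ξ ≤ ψ' ξ := by
      rw [div_le_iff₀ hξ]
      exact mul_le_mul_of_nonneg_left (not_le.mp hξx).le hψ'
    nlinarith [hmono self_mem_Ici hξy hξy]
  · have hξ : 0 < ξ := hx.trans (not_le.mp hξx)
    have hquad : ψ' ξ * x / ξ ≤ ψ' ξ * y / ξ := by gcongr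
    nlinarith

theorem convexOn_Ici_cohesive_add_mul_sq (hξ : 0 ≤ ξ) (hψc : ContinuousOn ψ (Ici 0))
    (hψ : ∀ w ∈ Ici ξ, HasDerivWithinAt ψ (ψ' w) (Ici ξ) w)
    (hmono : MonotoneOn (fun w => ψ' w + β * w) (Ici ξ)) (hψ' : 0 ≤ ψ' ξ) (hβ : 0 ≤ β) :
    ConvexOn ℝ (Ici 0) (fun w => cohesive ψ ψ' w ξ + β / 2 * w ^ 2) := by
  have hderiv : ∀ w ∈ interior (Ici (0 : ℝ)), HasDerivAt
      (fun w => cohesive ψ ψ' w ξ + β / 2 * w ^ 2) (cohesiveDeriv ψ' w ξ + β * w) w := by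
    rw [interior_Ici]
    intro w hw
    exact (hasDerivAt_cohesive hξ hψ hw).add
      (((hasDerivAt_pow 2 w).const_mul (β / 2)).congr_deriv (by ring))
  refine MonotoneOn.convexOn_of_deriv (convex_Ici 0)
    ((continuous_cohesive hψc).add (by fun_prop)).continuousOn
    (fun w hw => (hderiv w hw).differentiableAt.differentiableWithinAt) ?_
  refine MonotoneOn.congr ?_ fun w hw => ((hderiv w hw).deriv).symm
  rw [interior_Ici]
  exact monotoneOn_cohesiveDeriv_add_mul hmono hψ' hβ

end Cohesive

theorem Function.Even.convexOn_univ {f : ℝ → ℝ} (hf : f.Even) (hconv : ConvexOn ℝ (Ici 0) f)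
    (hmono : MonotoneOn f (Ici 0)) : ConvexOn ℝ univ f := by
  have himage : (|·|) '' univ = Ici (0 : ℝ) :=
    ext fun y => ⟨fun ⟨x, _, hx⟩ => hx ▸ abs_nonneg x, fun hy => ⟨y, trivial, abs_of_nonneg hy⟩⟩
  have hcomp : f ∘ (|·|) = f := funext fun x => by
    rcases abs_choice x with h | h <;> simp [h, hf x]
  rw [← hcomp]
  exact ConvexOn.comp (himage ▸ hconv) convexOn_univ_norm (himage ▸ hmono)

theorem cohesive_even_monotone_lambda_convex_general
    (ξc : ℝ) (hξc : 0 < ξc) (psih psih' psih'' : ℝ → ℝ)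
    (hconc : ConcaveOn ℝ (Set.Ici 0) psih)
    (hconst : ∀ w ≥ ξc, psih w = psih ξc)
    (hC1 : ∀ w ∈ Set.Ici (0:ℝ), HasDerivWithinAt psih (psih' w) (Set.Ici 0) w)
    (hC2 : ∀ w ∈ Set.Icc (0:ℝ) ξc, HasDerivWithinAt psih' (psih'' w) (Set.Icc 0 ξc) w)
    (β : ℝ) (hβ : IsLeast (psih'' '' Set.Icc 0 ξc) (-β)) :
    ∀ ξ ≥ (0:ℝ),
      (∀ w : ℝ, cohesive psih psih' (-w) ξ = cohesive psih psih' w ξ) ∧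
      MonotoneOn (fun w => cohesive psih psih' w ξ) (Set.Ici 0) ∧
      ConvexOn ℝ Set.univ (fun w : ℝ => cohesive psih psih' w ξ + β / 2 * w ^ 2) := by
  intro ξ hξ
  have hψ'_zero : ∀ t ≥ ξc, psih' t = 0 := fun _ =>
    eq_zero_of_hasDerivWithinAt_of_const_Ici hξc.le hC1 hconst
  have hψ'_nonneg : ∀ t ≥ 0, 0 ≤ psih' t := fun _ =>
    hconc.deriv_nonneg_of_const_Ici hξc.le hC1 hconst
  have hmono_Icc := monotoneOn_add_mul_of_deriv_ge hC2 fun w hw => hβ.2 (mem_image_of_mem _ hw)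
  have hβ_nonneg : 0 ≤ β := nonneg_of_monotoneOn_add_mul hmono_Icc hξc
    ((hψ'_zero ξc le_rfl).trans_le (hψ'_nonneg 0 le_rfl))
  have hmono_deriv := (hmono_Icc.add_mul_Ici_of_eq_zero hξc.le hβ_nonneg hψ'_zero).mono
    (Ici_subset_Ici.mpr hξ)
  have hmono : MonotoneOn (fun w => cohesive psih psih' w ξ) (Ici 0) :=
    monotoneOn_cohesive (hconc.monotoneOn_of_const_Ici hξc.le hC1 hconst) (hψ'_nonneg ξ hξ)
  have hconv : ConvexOn ℝ (Ici 0) (fun w => cohesive psih psih' w ξ + β / 2 * w ^ 2) :=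
    convexOn_Ici_cohesive_add_mul_sq hξ (fun w hw => (hC1 w hw).continuousWithinAt)
      (fun w hw => (hC1 w (hξ.trans hw)).mono (Ici_subset_Ici.mpr hξ)) hmono_deriv
      (hψ'_nonneg ξ hξ) hβ_nonneg
  have hmono_sq : MonotoneOn (fun w : ℝ => β / 2 * w ^ 2) (Ici 0) := fun x (hx : 0 ≤ x) _ _ hxy =>
    mul_le_mul_of_nonneg_left (pow_le_pow_left₀ hx hxy 2) (by linarith)
  exact ⟨cohesive_neg, hmono,
    Function.Even.convexOn_univ (fun w => by simp only [cohesive_neg, neg_sq]) hconv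
      (hmono.add hmono_sq)⟩

/-- for every fixed ξ ≥ 0, ψ(·,ξ) is even, nondecreasing on [0,∞),
and w ↦ ψ(w,ξ) + (β/2)·w² is convex on ℝ, where −β = min{ψ̂''(w) : w ∈ [0,ξ_c]}. -/
theorem cohesive_even_monotone_lambda_convex
    (ξc : ℝ) (hξc : 0 < ξc) (psih psih' psih'' : ℝ → ℝ)
    (hnn : ∀ w ≥ (0:ℝ), 0 ≤ psih w)
    (hconc : ConcaveOn ℝ (Set.Ici 0) psih)
    (h0 : psih 0 = 0)
    (hpos : ∀ w > (0:ℝ), 0 < psih w)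
    (hconst : ∀ w ≥ ξc, psih w = psih ξc)
    (hC1 : ∀ w ∈ Set.Ici (0:ℝ), HasDerivWithinAt psih (psih' w) (Set.Ici 0) w)
    (hC1c : ContinuousOn psih' (Set.Ici 0))
    (hC2 : ∀ w ∈ Set.Icc (0:ℝ) ξc, HasDerivWithinAt psih' (psih'' w) (Set.Icc 0 ξc) w)
    (hC2c : ContinuousOn psih'' (Set.Icc 0 ξc))
    (β : ℝ) (hβ : IsLeast (psih'' '' Set.Icc 0 ξc) (-β)) :
    ∀ ξ ≥ (0:ℝ),
      (∀ w : ℝ, cohesive psih psih' (-w) ξ = cohesive psih psih' w ξ) ∧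
      MonotoneOn (fun w => cohesive psih psih' w ξ) (Set.Ici 0) ∧
      ConvexOn ℝ Set.univ (fun w : ℝ => cohesive psih psih' w ξ + β / 2 * w ^ 2) :=
  cohesive_even_monotone_lambda_convex_general ξc hξc psih psih' psih'' hconc hconst hC1 hC2 β hβ
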